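/- Under the SMO-GP-single acceptance rule on MO-WORDER, starting from a non-redundant solution, every solution ever accepted into the population is non-redundant; consequently the complexity of every population member lies in {0, 1, 3, 5, ..., 2n-1} and the population size never exceeds n+1. -/

import Mathlib

open Finset

/-- A GP syntax tree over `n` variables: the only function symbol is the binary join
`J`; leaves are labelled by literals `(i, b)` where `b = true` stands for `x_i` and
`b = false` for the complement `x̄_i`. -/
inductive GPTree (n : ℕ) : Type
  | leaf (v : Fin n × Bool) : GPTree n
  | node (l r : GPTree n) : GPTree n

namespace GPTree

variable {n : ℕ}

/-- The inorder list of leaf labels. -/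
def leafList : GPTree n → List (Fin n × Bool)
  | leaf v => [v]
  | node l r => l.leafList ++ r.leafList

/-- Total number of nodes. -/
def size : GPTree n → ℕ
  | leaf _ => 1
  | node l r => l.size + r.size + 1

/-- Number of leaves. -/
def numLeaves (t : GPTree n) : ℕ := t.leafList.length

end GPTree

/-- A solution is either the empty tree (`none`) or a nonempty syntax tree. -/
abbrev GPSol (n : ℕ) := Option (GPTree n)

namespace GPSol

variable {n : ℕ}

/-- The complexity `C`: the number of nodes (the empty tree has complexity 0). -/
def complexity : GPSol n → ℕ
  | none => 0
  | some t => t.size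

/-- The inorder leaf list. -/
def leaves : GPSol n → List (Fin n × Bool)
  | none => []
  | some t => t.leafList

/-- Number of leaves. -/
def numLeaves (X : GPSol n) : ℕ := X.leaves.length

/-- The set `S` of expressed variables for (W)ORDER: `x_i ∈ S` iff the first
occurrence of a literal of variable `i` in the inorder leaf list is positive. -/
def orderSet (X : GPSol n) : Finset (Fin n) :=
  Finset.univ.filter fun i => X.leaves.find? (fun p => p.1 == i) = some (i, true)

/-- `WORDER(X) = ∑_{x_i ∈ S} w_i`. -/
def worder (w : Fin n → ℝ) (X : GPSol n) : ℝ := ∑ i ∈ orderSet X, w i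

/-- `ORDER(X)`: the number of expressed variables (all weights equal to 1). -/
def order (X : GPSol n) : ℕ := (orderSet X).card

/-- The set `S` of expressed variables for (W)MAJORITY: `x_i ∈ S` iff `x_i` occurs in
the leaf list and at least as often as `x̄_i`. -/
def majoritySet (X : GPSol n) : Finset (Fin n) :=
  Finset.univ.filter fun i =>
    1 ≤ X.leaves.count (i, true) ∧ X.leaves.count (i, false) ≤ X.leaves.count (i, true)

/-- `WMAJORITY(X) = ∑_{x_i ∈ S} w_i`. -/
def wmajority (w : Fin n → ℝ) (X : GPSol n) : ℝ := ∑ i ∈ majoritySet X, w i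

end GPSol
/-- `Substitute t t'`: `t'` is obtained from `t` by replacing one leaf label. -/
inductive Substitute {n : ℕ} : GPTree n → GPTree n → Prop
  | leaf (a b : Fin n × Bool) : Substitute (.leaf a) (.leaf b)
  | left {l l' r : GPTree n} : Substitute l l' → Substitute (.node l r) (.node l' r)
  | right {l r r' : GPTree n} : Substitute r r' → Substitute (.node l r) (.node l r')

/-- `InsertLeaf t t'`: `t'` is obtained from `t` by replacing some subtree `v` by a join
node whose children are `v` and a new leaf (in either order). -/
inductive InsertLeaf {n : ℕ} : GPTree n → GPTree n → Prop
  | hereL (t : GPTree n) (a : Fin n × Bool) : InsertLeaf t (.node (.leaf a) t)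
  | hereR (t : GPTree n) (a : Fin n × Bool) : InsertLeaf t (.node t (.leaf a))
  | left {l l' r : GPTree n} : InsertLeaf l l' → InsertLeaf (.node l r) (.node l' r)
  | right {l r r' : GPTree n} : InsertLeaf r r' → InsertLeaf (.node l r) (.node l r')

/-- One application of the HVL-Prime operator on solutions (substitute, insert or
delete; deletion is the inverse of insertion, and the empty tree is handled as the
special case). -/
inductive HVLStep {n : ℕ} : GPSol n → GPSol n → Prop
  | sub {X Y : GPTree n} : Substitute X Y → HVLStep (some X) (some Y)
  | ins {X Y : GPTree n} : InsertLeaf X Y → HVLStep (some X) (some Y)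
  | insEmpty (a : Fin n × Bool) : HVLStep none (some (.leaf a))
  | del {X Y : GPTree n} : InsertLeaf Y X → HVLStep (some X) (some Y)
  | delToEmpty (a : Fin n × Bool) : HVLStep (some (.leaf a)) none

/-- A solution is non-redundant if it is the empty tree or if, expressing `k`
variables, it has complexity exactly `2k - 1`. -/
def NonRedundant {n : ℕ} (X : GPSol n) : Prop :=
  X = none ∨ (GPSol.complexity X : ℤ) = 2 * (GPSol.order X : ℤ) - 1

/-- `Dominates w Y X`: `Y` dominates `X` in the bi-objective problem
`(WORDER, C)` (`WORDER` maximized, `C` minimized). -/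
def Dominates {n : ℕ} (w : Fin n → ℝ) (Y X : GPSol n) : Prop :=
  GPSol.worder w X ≤ GPSol.worder w Y ∧
  GPSol.complexity Y ≤ GPSol.complexity X ∧
  (GPSol.worder w X < GPSol.worder w Y ∨ GPSol.complexity Y < GPSol.complexity X)

/-!
On trees the complexity is determined by the number of leaves `m` (it is `2m - 1`), and the
expressed variables are at most the variables of the positive leaves. Hence a tree is
non-redundant exactly when its leaves are positive literals of pairwise distinct variables.
On the inorder leaf list an HVL-Prime step inserts, replaces or erases one literal. Erasing
keeps the leaf list non-redundant; inserting a literal that breaks non-redundancy expresses no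
new variable, so the parent has at least the same `WORDER` and a smaller complexity; replacing
a literal of a non-redundant list by one that breaks non-redundancy loses the old literal's
variable, so `WORDER` drops strictly at equal complexity. Either way the parent dominates.
For the population bound, mutual non-dominance makes the complexity injective on the
population, and a non-redundant solution expressing `k ≤ n` variables has complexity `2k - 1`.
-/

section Edits

variable {β : Type*}

inductive SingleEdit : List β → List β → Prop
  | insert (A B : List β) (q : β) : SingleEdit (A ++ B) (A ++ q :: B)
  | replace (A B : List β) (a b : β) : SingleEdit (A ++ a :: B) (A ++ b :: B)
  | erase (A B : List β) (q : β) : SingleEdit (A ++ q :: B) (A ++ B)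

namespace SingleEdit

theorem symm {L L' : List β} (h : SingleEdit L L') : SingleEdit L' L := by
  cases h with
  | insert A B q => exact erase A B q
  | replace A B a b => exact replace A B b a
  | erase A B q => exact insert A B q

theorem append_right {L L' : List β} (h : SingleEdit L L') (M : List β) :
    SingleEdit (L ++ M) (L' ++ M) := by
  cases h with
  | insert A B q => simpa using insert A (B ++ M) q
  | replace A B a b => simpa using replace A (B ++ M) a b
  | erase A B q => simpa using erase A (B ++ M) q

theorem append_left {L L' : List β} (h : SingleEdit L L') (M : List β) :
    SingleEdit (M ++ L) (M ++ L') := by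
  cases h with
  | insert A B q => simpa using insert (M ++ A) B q
  | replace A B a b => simpa using replace (M ++ A) B a b
  | erase A B q => simpa using erase (M ++ A) B q

end SingleEdit

end Edits

section Literals

variable {α : Type*}

def NonRedundantLeaves (L : List (α × Bool)) : Prop :=
  (∀ p ∈ L, p.2 = true) ∧ (L.map Prod.fst).Nodup

theorem nonRedundantLeaves_middle_iff {A B : List (α × Bool)} {q : α × Bool} :
    NonRedundantLeaves (A ++ q :: B) ↔
      NonRedundantLeaves (A ++ B) ∧ q.2 = true ∧ q.1 ∉ (A ++ B).map Prod.fst := by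
  have hperm : ((A ++ q :: B).map Prod.fst).Perm (q.1 :: (A ++ B).map Prod.fst) := by
    simp
  simp only [NonRedundantLeaves, hperm.nodup_iff, List.nodup_cons, List.mem_append,
    List.mem_cons]
  grind

variable [Fintype α] [DecidableEq α]

def expressedVars (L : List (α × Bool)) : Finset α :=
  univ.filter fun i => L.find? (fun p => p.1 == i) = some (i, true)

theorem mem_expressedVars {L : List (α × Bool)} {i : α} :
    i ∈ expressedVars L ↔ L.find? (fun p => p.1 == i) = some (i, true) := by
  simp [expressedVars]

theorem mem_of_mem_expressedVars {L : List (α × Bool)} {i : α} (h : i ∈ expressedVars L) :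
    (i, true) ∈ L :=
  List.mem_of_find?_eq_some (mem_expressedVars.1 h)

theorem expressedVars_eq_of_forall_pos {L : List (α × Bool)} (h : ∀ p ∈ L, p.2 = true) :
    expressedVars L = (L.map Prod.fst).toFinset := by
  ext i
  simp only [mem_expressedVars, List.mem_toFinset, List.mem_map]
  constructor
  · exact fun hf => ⟨_, List.mem_of_find?_eq_some hf, rfl⟩
  · rintro ⟨p, hp, rfl⟩
    obtain ⟨q, hq⟩ : ∃ q, L.find? (fun q => q.1 == p.1) = some q :=
      Option.isSome_iff_exists.1 (List.find?_isSome.2 ⟨p, hp, beq_self_eq_true _⟩)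
    have hq1 : q.1 = p.1 := by
      have := List.find?_some hq
      simpa using this
    rw [hq, ← h q (List.mem_of_find?_eq_some hq), ← hq1]

theorem card_expressedVars_eq_length_iff {L : List (α × Bool)} :
    (expressedVars L).card = L.length ↔ NonRedundantLeaves L := by
  set l := (L.filter (·.2)).map Prod.fst
  have hsub : expressedVars L ⊆ l.toFinset := fun i hi => by
    simp only [l, List.mem_toFinset, List.mem_map, List.mem_filter]
    exact ⟨(i, true), ⟨mem_of_mem_expressedVars hi, rfl⟩, rfl⟩
  have hV : l.toFinset.card ≤ (L.filter (·.2)).length := by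
    simpa [l] using List.toFinset_card_le l
  constructor
  · intro h
    have hfilter : (L.filter (·.2)).length = L.length :=
      le_antisymm (List.length_filter_le _ _) (h ▸ (card_le_card hsub).trans hV)
    have hpos : ∀ p ∈ L, p.2 = true := List.length_filter_eq_length_iff.1 hfilter
    have hnodup : l.Nodup := by
      refine Multiset.coe_nodup.1 (Multiset.toFinset_card_eq_card_iff_nodup.1 (le_antisymm ?_ ?_))
      · exact List.toFinset_card_le l
      · simpa [l, hfilter, ← h] using card_le_card hsub
    exact ⟨hpos, by simpa [l, List.filter_eq_self.2 hpos] using hnodup⟩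
  · intro ⟨hpos, hnodup⟩
    rw [expressedVars_eq_of_forall_pos hpos, List.toFinset_card_of_nodup hnodup,
      List.length_map]

theorem NonRedundantLeaves.insert_or_expressedVars_subset {A B : List (α × Bool)}
    (hL : NonRedundantLeaves (A ++ B)) (q : α × Bool) :
    NonRedundantLeaves (A ++ q :: B) ∨ expressedVars (A ++ q :: B) ⊆ expressedVars (A ++ B) := by
  by_cases hq : q.2 = true ∧ q.1 ∉ (A ++ B).map Prod.fst
  · exact Or.inl (nonRedundantLeaves_middle_iff.2 ⟨hL, hq⟩)
  · refine Or.inr fun i hi => ?_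
    rw [expressedVars_eq_of_forall_pos hL.1, List.mem_toFinset]
    have hmem : (i, true) ∈ A ++ B ∨ (i, true) = q := by
      simpa [or_comm, or_left_comm] using mem_of_mem_expressedVars hi
    rcases hmem with hmem | rfl
    · exact List.mem_map.2 ⟨_, hmem, rfl⟩
    · exact not_not.1 fun h => hq ⟨rfl, h⟩

theorem SingleEdit.nonRedundantLeaves_or {L L' : List (α × Bool)}
    (h : SingleEdit L L') (hL : NonRedundantLeaves L) :
    NonRedundantLeaves L' ∨
      (expressedVars L' ⊆ expressedVars L ∧ L.length < L'.length) ∨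
      (expressedVars L' ⊂ expressedVars L ∧ L'.length = L.length) := by
  cases h with
  | insert A B q =>
    exact (hL.insert_or_expressedVars_subset q).imp_right fun hS => Or.inl ⟨hS, by simp⟩
  | replace A B a b =>
    obtain ⟨hAB, -, haAB⟩ := nonRedundantLeaves_middle_iff.1 hL
    refine (hAB.insert_or_expressedVars_subset b).imp_right fun hS => Or.inr ⟨?_, by simp⟩
    refine hS.trans_ssubset (Finset.ssubset_iff.2 ⟨a.1, ?_, fun i hi => ?_⟩)
    · rwa [expressedVars_eq_of_forall_pos hAB.1, List.mem_toFinset]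
    · rw [expressedVars_eq_of_forall_pos hL.1]
      rw [expressedVars_eq_of_forall_pos hAB.1] at hi
      simp only [Finset.mem_insert, List.mem_toFinset, List.mem_map, List.mem_append,
        List.mem_cons] at hi ⊢
      grind
  | erase A B q => exact Or.inl (nonRedundantLeaves_middle_iff.1 hL).1

end Literals

variable {n : ℕ}

theorem GPTree.size_add_one (t : GPTree n) : t.size + 1 = 2 * t.leafList.length := by
  induction t with
  | leaf v => rfl
  | node l r ihl ihr =>
    simp only [GPTree.size, GPTree.leafList, List.length_append]
    omega

theorem Substitute.singleEdit_leafList {t t' : GPTree n} (h : Substitute t t') :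
    SingleEdit t.leafList t'.leafList := by
  induction h with
  | leaf a b => exact .replace [] [] a b
  | @left l l' r _ ih => exact ih.append_right r.leafList
  | @right l r r' _ ih => exact ih.append_left l.leafList

theorem InsertLeaf.singleEdit_leafList {t t' : GPTree n} (h : InsertLeaf t t') :
    SingleEdit t.leafList t'.leafList := by
  induction h with
  | hereL t a => exact .insert [] t.leafList a
  | hereR t a => simpa [GPTree.leafList] using SingleEdit.insert t.leafList [] a
  | @left l l' r _ ih => exact ih.append_right r.leafList
  | @right l r r' _ ih => exact ih.append_left l.leafList

theorem HVLStep.singleEdit_leaves {X Y : GPSol n} (h : HVLStep X Y) :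
    SingleEdit X.leaves Y.leaves := by
  cases h with
  | sub h => exact h.singleEdit_leafList
  | ins h => exact h.singleEdit_leafList
  | insEmpty a => exact .insert [] [] a
  | del h => exact h.singleEdit_leafList.symm
  | delToEmpty a => exact .erase [] [] a

namespace GPSol

theorem complexity_eq (X : GPSol n) : X.complexity = 2 * X.leaves.length - 1 := by
  cases X with
  | none => rfl
  | some t =>
    have := t.size_add_one
    simp only [complexity, leaves]
    omega

theorem orderSet_eq (X : GPSol n) : X.orderSet = expressedVars X.leaves := rfl

theorem order_le (X : GPSol n) : X.order ≤ n :=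
  (card_le_univ _).trans_eq (Fintype.card_fin n)

end GPSol

theorem nonRedundant_iff {X : GPSol n} : NonRedundant X ↔ NonRedundantLeaves X.leaves := by
  cases X with
  | none => simp [NonRedundant, NonRedundantLeaves, GPSol.leaves]
  | some t =>
    rw [← card_expressedVars_eq_length_iff]
    have := t.size_add_one
    simp only [NonRedundant, reduceCtorEq, false_or, GPSol.complexity, GPSol.order,
      GPSol.orderSet_eq, GPSol.leaves]
    omega

/-- The truncated `2 * 0 - 1 = 0` covers the empty tree. -/
theorem NonRedundant.complexity_eq {X : GPSol n} (h : NonRedundant X) :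
    X.complexity = 2 * X.order - 1 := by
  rcases h with rfl | h
  · simp [GPSol.complexity, GPSol.order, GPSol.orderSet, GPSol.leaves]
  · omega

section Dominance

variable {w : Fin n → ℝ} {X Y : GPSol n}

theorem dominates_of_orderSet_subset_of_length_lt (hw : ∀ i, 0 ≤ w i)
    (hS : Y.orderSet ⊆ X.orderSet) (hlen : X.leaves.length < Y.leaves.length) :
    Dominates w X Y := by
  have hC : X.complexity < Y.complexity := by
    rw [GPSol.complexity_eq, GPSol.complexity_eq]
    omega
  exact ⟨sum_le_sum_of_subset_of_nonneg hS fun i _ _ => hw i, hC.le, Or.inr hC⟩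

theorem dominates_of_orderSet_ssubset_of_length_eq (hw : ∀ i, 0 < w i)
    (hS : Y.orderSet ⊂ X.orderSet) (hlen : Y.leaves.length = X.leaves.length) :
    Dominates w X Y := by
  obtain ⟨i, hiX, hiY⟩ := Finset.exists_of_ssubset hS
  have hW : GPSol.worder w Y < GPSol.worder w X :=
    sum_lt_sum_of_subset hS.subset hiX hiY (hw i) fun j _ _ => (hw j).le
  have hC : X.complexity = Y.complexity := by
    rw [GPSol.complexity_eq, GPSol.complexity_eq, hlen]
  exact ⟨hW.le, hC.le, Or.inl hW⟩

end Dominance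

theorem NonRedundant.of_hVLStep {w : Fin n → ℝ} (hw : ∀ i, 0 < w i) {X Y : GPSol n}
    (hX : NonRedundant X) (h : HVLStep X Y) (hdom : ¬ Dominates w X Y) : NonRedundant Y := by
  rw [nonRedundant_iff] at hX ⊢
  rcases h.singleEdit_leaves.nonRedundantLeaves_or hX with hY | ⟨hS, hlen⟩ | ⟨hS, hlen⟩
  · exact hY
  · exact absurd (dominates_of_orderSet_subset_of_length_lt (fun i => (hw i).le) hS hlen) hdom
  · exact absurd (dominates_of_orderSet_ssubset_of_length_eq hw hS hlen) hdom

theorem card_le_of_injOn_complexity {P : Finset (GPSol n)} (hP : ∀ X ∈ P, NonRedundant X)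
    (hinj : Set.InjOn GPSol.complexity (P : Set (GPSol n))) : P.card ≤ n + 1 :=
  calc P.card = (P.image GPSol.complexity).card := (card_image_of_injOn hinj).symm
    _ ≤ ((range (n + 1)).image fun k => 2 * k - 1).card := by
      refine card_le_card (image_subset_iff.2 fun X hX => mem_image.2 ⟨X.order, ?_, ?_⟩)
      · exact mem_range.2 (Nat.lt_succ_of_le X.order_le)
      · exact ((hP X hX).complexity_eq).symm
    _ ≤ n + 1 := card_image_le.trans (card_range _).le

/-- under the SMO-GP-single acceptance rule on MO-WORDER (positive
weights), an offspring of a non-redundant solution that is not dominated by its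
parent is again non-redundant; consequently, in any population of non-redundant
solutions that are pairwise not weakly dominating (as maintained by SMO-GP), each
member has complexity in `{0, 1, 3, 5, ..., 2n-1}` and the population size is at
most `n + 1`. -/
theorem stmt12 {n : ℕ} (w : Fin n → ℝ) (hpos : ∀ i, 0 < w i) :
    (∀ X Y : GPSol n, NonRedundant X → HVLStep X Y →
      ¬ Dominates w X Y → NonRedundant Y) ∧
    (∀ P : Finset (GPSol n), (∀ X ∈ P, NonRedundant X) →
      (∀ X ∈ P, ∀ Y ∈ P, X ≠ Y →
        ¬ (GPSol.worder w X ≤ GPSol.worder w Y ∧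
            GPSol.complexity Y ≤ GPSol.complexity X)) →
      (∀ X ∈ P, GPSol.complexity X = 0 ∨
        ∃ k : ℕ, 1 ≤ k ∧ k ≤ n ∧ GPSol.complexity X = 2 * k - 1) ∧
      P.card ≤ n + 1) := by
  refine ⟨fun X Y hX h hdom => hX.of_hVLStep hpos h hdom, fun P hP hpair => ⟨?_, ?_⟩⟩
  · intro X hX
    rw [(hP X hX).complexity_eq]
    rcases Nat.eq_zero_or_pos X.order with h0 | hk
    · exact Or.inl (by rw [h0])
    · exact Or.inr ⟨X.order, hk, X.order_le, rfl⟩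
  · refine card_le_of_injOn_complexity hP fun X hX Y hY hXY => ?_
    by_contra hne
    rcases le_total (GPSol.worder w X) (GPSol.worder w Y) with hle | hle
    · exact hpair X hX Y hY hne ⟨hle, hXY.ge⟩
    · exact hpair Y hY X hX (Ne.symm hne) ⟨hle, hXY.le⟩
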